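/- Let I ⊆ S = K[x_1,…,x_t] be an 𝔪-primary monomial ideal and for each i = 1,…,t let a_i ≥ 1 be such that x_i^{a_i} ∈ G(I). Then v(I) = (a_1 + a_2 + ⋯ + a_t) − t if and only if I = ⟨x_1^{a_1}, x_2^{a_2}, …, x_t^{a_t}⟩. -/

import Mathlib

/-!
For homogeneous `f`, `(I : f)` is an associated prime of `S/I` exactly when `f ∉ I` and
`𝔪 f ⊆ I` (the colon ideal is then `𝔪`), and for a monomial ideal some monomial of `f` inherits
this property. So `v(I)` is the least degree of a monomial `x^c ∉ I` with `x_i x^c ∈ I` for all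
`i`. For `J = ⟨x_1^{a_1}, …, x_t^{a_t}⟩` the only such monomial is `x^{a - 1}`, of degree
`∑ a_i - t`. If `I ⊋ J`, a monomial of `I` outside `J` divides `x^{a - 1}`, so `x^{a - 1} ∈ I`,
and a maximal divisor of `x^{a - 1}` outside `I` is such a monomial of smaller degree.
-/

open MvPolynomial

noncomputable section

/-- The `v`-number of a graded ideal `I ⊆ K[x_1,…,x_t]`: the least `k ≥ 0` such that there is a
homogeneous polynomial `f` of degree `k` with `(I : f)` an associated prime of `S/I`. -/
def vNumber {σ K : Type*} [Field K] (I : Ideal (MvPolynomial σ K)) : ℕ :=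
  sInf {k : ℕ | ∃ f : MvPolynomial σ K, f.IsHomogeneous k ∧
    Submodule.colon I (Ideal.span {f}) ∈
      associatedPrimes (MvPolynomial σ K) (MvPolynomial σ K ⧸ I)}

/-- The edge ideal of a simple graph: generated by `x_i * x_j` for edges `{x_i, x_j}`. -/
def edgeIdeal (K : Type*) [Field K] {V : Type*} (G : SimpleGraph V) :
    Ideal (MvPolynomial V K) :=
  Ideal.span {m | ∃ i j, G.Adj i j ∧ m = X i * X j}

/-- `I` is a monomial ideal: generated by a set of monomials. -/
def IsMonomialIdeal {σ K : Type*} [Field K] (I : Ideal (MvPolynomial σ K)) : Prop :=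
  ∃ A : Set (σ →₀ ℕ), I = Ideal.span ((fun a => (monomial a (1 : K))) '' A)

/-- The graded maximal ideal `𝔪 = ⟨x_1,…,x_t⟩`. -/
def maxIdeal (K : Type*) [Field K] (σ : Type*) : Ideal (MvPolynomial σ K) :=
  Ideal.span (Set.range (X : σ → MvPolynomial σ K))

/-- `α(I)`: the minimum degree of a nonzero element of `I`. -/
def alphaNumber {σ K : Type*} [Field K] (I : Ideal (MvPolynomial σ K)) : ℕ :=
  sInf {d : ℕ | ∃ f ∈ I, f ≠ 0 ∧ f.totalDegree = d}

/-- Exponent vectors of the minimal monomial generators of a monomial ideal `I`: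
monomials in `I` none of whose proper divisors lies in `I`. -/
def minimalGenerators {σ K : Type*} [Field K] (I : Ideal (MvPolynomial σ K)) :
    Set (σ →₀ ℕ) :=
  {a | (monomial a (1 : K)) ∈ I ∧
    ∀ b : σ →₀ ℕ, b ≤ a → b ≠ a → (monomial b (1 : K)) ∉ I}

namespace Ideal

variable {R : Type*} [CommRing R]

theorem colon_span_singleton_mem_associatedPrimes {I : Ideal R} {f : R}
    (h : (I.colon (span {f})).IsPrime) : I.colon (span {f}) ∈ associatedPrimes R (R ⧸ I) := by
  refine ⟨h, Quotient.mk I f, ?_⟩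
  have hcolon : Submodule.colon (⊥ : Submodule R (R ⧸ I)) {Quotient.mk I f} =
      I.colon (span {f}) := by
    ext g
    rw [Submodule.mem_colon_singleton, Submodule.mem_bot, mem_colon_span_singleton,
      ← Ideal.Quotient.mk_eq_mk, ← Submodule.Quotient.mk_smul, smul_eq_mul,
      Ideal.Quotient.mk_eq_mk, Quotient.eq_zero_iff_mem]
  rw [hcolon, h.radical]

end Ideal

theorem Finsupp.degree_strictMono {σ : Type*} : StrictMono (degree : (σ →₀ ℕ) → ℕ) := by
  intro c e hce
  obtain ⟨d, rfl⟩ := exists_add_of_le hce.le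
  have hd : degree d ≠ 0 := (degree_eq_zero_iff d).not.mpr (by rintro rfl; simp at hce)
  rw [map_add]
  omega

theorem Finsupp.degree_eq_sum_sub_card {σ : Type*} [Fintype σ] {e : σ →₀ ℕ} {a : σ → ℕ}
    (he : ∀ i, e i + 1 = a i) : e.degree = ∑ i, a i - Fintype.card σ := by
  have hsum : ∑ i, a i = e.degree + Fintype.card σ := by
    simp only [← he, Finset.sum_add_distrib, degree_eq_sum, Finset.sum_const, Finset.card_univ,
      smul_eq_mul, mul_one]
  omega

theorem Finsupp.exists_add_one_eq {σ : Type*} [Finite σ] {a : σ → ℕ} (ha : ∀ i, 1 ≤ a i) :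
    ∃ e : σ →₀ ℕ, ∀ i, e i + 1 = a i :=
  ⟨equivFunOnFinite.symm fun i => a i - 1, fun i => Nat.sub_add_cancel (ha i)⟩

namespace MvPolynomial

variable {σ K : Type*} [Field K]

theorem X_mul_monomial_one (i : σ) (c : σ →₀ ℕ) :
    X i * monomial c (1 : K) = monomial (Finsupp.single i 1 + c) 1 := by
  rw [X, monomial_mul, one_mul]

theorem monomial_mem_of_le {I : Ideal (MvPolynomial σ K)} {s b : σ →₀ ℕ}
    (hs : monomial s (1 : K) ∈ I) (h : s ≤ b) : monomial b (1 : K) ∈ I :=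
  I.mem_of_dvd (monomial_dvd_monomial.mpr ⟨Or.inr h, dvd_rfl⟩) hs

theorem mem_of_forall_monomial_mem {I : Ideal (MvPolynomial σ K)} {f : MvPolynomial σ K}
    (h : ∀ b ∈ f.support, monomial b (1 : K) ∈ I) : f ∈ I := by
  rw [f.as_sum]
  refine I.sum_mem fun b hb => ?_
  rw [← mul_one (coeff b f), ← C_mul_monomial]
  exact I.mul_mem_left _ (h b hb)

theorem maxIdeal_eq_ker_constantCoeff :
    maxIdeal K σ = RingHom.ker (constantCoeff : MvPolynomial σ K →+* K) := by
  ext p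
  rw [RingHom.mem_ker, constantCoeff_eq, maxIdeal, ← pow_one (Ideal.span _),
    mem_pow_idealOfVars_iff]
  refine ⟨fun h => by_contra fun h0 => ?_, fun h b hb => ?_⟩
  · simpa using h 0 (mem_support_iff.mpr h0)
  · refine Nat.one_le_iff_ne_zero.mpr fun hb0 => mem_support_iff.mp hb ?_
    rwa [(Finsupp.degree_eq_zero_iff b).mp hb0]

theorem maxIdeal_isMaximal : (maxIdeal K σ).IsMaximal := by
  rw [maxIdeal_eq_ker_constantCoeff]
  exact RingHom.ker_isMaximal_of_surjective _ fun r => ⟨C r, constantCoeff_C σ r⟩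

theorem X_mem_maxIdeal (i : σ) : X i ∈ maxIdeal K σ :=
  Ideal.subset_span ⟨i, rfl⟩

theorem one_notMem_of_radical_eq_maxIdeal {I : Ideal (MvPolynomial σ K)}
    (hrad : I.radical = maxIdeal K σ) : (1 : MvPolynomial σ K) ∉ I := by
  rw [← Ideal.eq_top_iff_one, ← Ideal.radical_eq_top, hrad]
  exact maxIdeal_isMaximal.ne_top

/-- `f` represents a nonzero element of the socle `(I : 𝔪) / I` of `S / I`. -/
def IsSocleElement (I : Ideal (MvPolynomial σ K)) (f : MvPolynomial σ K) : Prop :=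
  f ∉ I ∧ ∀ i, X i * f ∈ I

namespace IsSocleElement

variable {I : Ideal (MvPolynomial σ K)} {f : MvPolynomial σ K}

theorem colon_eq_maxIdeal (hf : IsSocleElement I f) : I.colon (Ideal.span {f}) = maxIdeal K σ := by
  refine (maxIdeal_isMaximal.eq_of_le ?_ ?_).symm
  · rw [Ne, Ideal.eq_top_iff_one, Ideal.mem_colon_span_singleton, one_mul]
    exact hf.1
  · rw [maxIdeal, Ideal.span_le, Set.range_subset_iff]
    exact fun i => Ideal.mem_colon_span_singleton.mpr (hf.2 i)

theorem colon_mem_associatedPrimes (hf : IsSocleElement I f) :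
    I.colon (Ideal.span {f}) ∈ associatedPrimes _ (MvPolynomial σ K ⧸ I) :=
  Ideal.colon_span_singleton_mem_associatedPrimes
    (hf.colon_eq_maxIdeal ▸ maxIdeal_isMaximal.isPrime)

theorem vNumber_le (hf : IsSocleElement I f) {k : ℕ} (hk : f.IsHomogeneous k) : vNumber I ≤ k :=
  Nat.sInf_le ⟨f, hk, hf.colon_mem_associatedPrimes⟩

end IsSocleElement

theorem isSocleElement_of_colon_mem_associatedPrimes {I : Ideal (MvPolynomial σ K)}
    {f : MvPolynomial σ K} (hrad : I.radical = maxIdeal K σ)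
    (h : I.colon (Ideal.span {f}) ∈ associatedPrimes _ (MvPolynomial σ K ⧸ I)) :
    IsSocleElement I f := by
  have hP := h.isPrime
  refine ⟨fun hf => hP.ne_top ?_, fun i => ?_⟩
  · rw [Ideal.eq_top_iff_one, Ideal.mem_colon_span_singleton, one_mul]
    exact hf
  · have hrad_le : I.radical ≤ I.colon (Ideal.span {f}) := hP.radical_le_iff.mpr Ideal.le_colon
    exact Ideal.mem_colon_span_singleton.mp (hrad_le (hrad ▸ X_mem_maxIdeal i))

/-- For `c` maximal among the divisors of `x^e` outside `I`, each `x_i x^c` is either a larger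
divisor of `x^e`, hence in `I`, or divisible by `x_i ^ (e_i + 1)`. -/
theorem exists_isSocleElement_monomial_le {I : Ideal (MvPolynomial σ K)} {e : σ →₀ ℕ}
    (h1 : (1 : MvPolynomial σ K) ∉ I) (hpow : ∀ i, X i ^ (e i + 1) ∈ I) :
    ∃ c ≤ e, IsSocleElement I (monomial c (1 : K)) := by
  classical
  obtain ⟨c, hc, hmax⟩ := ((Finset.Icc 0 e).filter fun c => monomial c (1 : K) ∉ I).exists_maximal
    ⟨0, by simpa using h1⟩
  simp only [Finset.mem_filter, Finset.mem_Icc] at hc hmax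
  refine ⟨c, hc.1.2, hc.2, fun i => ?_⟩
  rw [X_mul_monomial_one]
  by_cases hci : c i < e i
  · by_contra hnot
    have hle : Finsupp.single i 1 + c ≤ e := Finsupp.le_def.mpr fun j => by
      rcases eq_or_ne i j with rfl | hij
      · simp only [Finsupp.add_apply, Finsupp.single_eq_same]
        omega
      · simpa [Finsupp.single_eq_of_ne' hij] using Finsupp.le_def.mp hc.1.2 j
    have := Finsupp.le_def.mp (hmax ⟨⟨zero_le, hle⟩, hnot⟩ le_add_self) i
    simp at this
  · have hpow_i := hpow i
    rw [X_pow_eq_monomial] at hpow_i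
    refine monomial_mem_of_le hpow_i (Finsupp.single_le_iff.mpr ?_)
    simp only [Finsupp.add_apply, Finsupp.single_eq_same]
    omega

namespace IsMonomialIdeal

variable {I : Ideal (MvPolynomial σ K)}

theorem monomial_mem_of_mem (hI : IsMonomialIdeal I) {f : MvPolynomial σ K} (hf : f ∈ I)
    {b : σ →₀ ℕ} (hb : b ∈ f.support) : monomial b (1 : K) ∈ I := by
  obtain ⟨A, rfl⟩ := hI
  obtain ⟨s, hs, hsb⟩ := mem_ideal_span_monomial_image.mp hf b hb
  exact monomial_mem_of_le (Ideal.subset_span ⟨s, hs, rfl⟩) hsb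

theorem le_of_forall_monomial_mem (hI : IsMonomialIdeal I) {J : Ideal (MvPolynomial σ K)}
    (h : ∀ b, monomial b (1 : K) ∈ I → monomial b (1 : K) ∈ J) : I ≤ J :=
  fun _ hf => mem_of_forall_monomial_mem fun b hb => h b (hI.monomial_mem_of_mem hf hb)

theorem exists_isSocleElement_monomial (hI : IsMonomialIdeal I) {f : MvPolynomial σ K}
    (hf : IsSocleElement I f) : ∃ b ∈ f.support, IsSocleElement I (monomial b (1 : K)) := by
  obtain ⟨b, hb, hbI⟩ : ∃ b ∈ f.support, monomial b (1 : K) ∉ I := by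
    by_contra! h
    exact hf.1 (mem_of_forall_monomial_mem h)
  refine ⟨b, hb, hbI, fun i => ?_⟩
  rw [X_mul_monomial_one]
  refine hI.monomial_mem_of_mem (hf.2 i) ?_
  rw [mem_support_iff, coeff_X_mul]
  exact mem_support_iff.mp hb

theorem vNumber_eq_sInf_degree (hI : IsMonomialIdeal I) (hrad : I.radical = maxIdeal K σ) :
    vNumber I = sInf (Finsupp.degree '' {c | IsSocleElement I (monomial c (1 : K))}) := by
  rw [vNumber]
  congr 1
  ext k
  constructor
  · rintro ⟨f, hf, hP⟩
    obtain ⟨b, hb, hbsoc⟩ :=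
      hI.exists_isSocleElement_monomial (isSocleElement_of_colon_mem_associatedPrimes hrad hP)
    exact ⟨b, hbsoc, by rw [Finsupp.degree_eq_weight_one]; exact hf (mem_support_iff.mp hb)⟩
  · rintro ⟨c, hc, rfl⟩
    exact ⟨_, isHomogeneous_monomial _ rfl, hc.colon_mem_associatedPrimes⟩

end IsMonomialIdeal

theorem vNumber_lt_degree_of_monomial_mem {I : Ideal (MvPolynomial σ K)} {e : σ →₀ ℕ}
    (h1 : (1 : MvPolynomial σ K) ∉ I) (hpow : ∀ i, X i ^ (e i + 1) ∈ I)
    (he : monomial e (1 : K) ∈ I) : vNumber I < e.degree := by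
  obtain ⟨c, hce, hc⟩ := exists_isSocleElement_monomial_le h1 hpow
  have hlt : c < e := hce.lt_of_ne (by rintro rfl; exact hc.1 he)
  exact (hc.vNumber_le (isHomogeneous_monomial _ rfl)).trans_lt (Finsupp.degree_strictMono hlt)

variable (K) in
def purePowerIdeal (a : σ → ℕ) : Ideal (MvPolynomial σ K) :=
  Ideal.span (Set.range fun i => X i ^ a i)

section purePowerIdeal

variable {a : σ → ℕ}

theorem purePowerIdeal_eq_span_monomial : purePowerIdeal K a =
    Ideal.span ((fun s => monomial s (1 : K)) '' Set.range fun i => Finsupp.single i (a i)) := by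
  rw [purePowerIdeal, ← Set.range_comp]
  simp only [Function.comp_def, X_pow_eq_monomial]

theorem isMonomialIdeal_purePowerIdeal : IsMonomialIdeal (purePowerIdeal K a) :=
  ⟨_, purePowerIdeal_eq_span_monomial⟩

theorem X_pow_mem_purePowerIdeal (i : σ) : X i ^ a i ∈ purePowerIdeal K a :=
  Ideal.subset_span ⟨i, rfl⟩

theorem monomial_mem_purePowerIdeal_iff {b : σ →₀ ℕ} :
    monomial b (1 : K) ∈ purePowerIdeal K a ↔ ∃ i, a i ≤ b i := by
  rw [purePowerIdeal_eq_span_monomial, mem_ideal_span_monomial_image]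
  classical
  simp only [support_monomial, if_neg one_ne_zero, Finset.mem_singleton, forall_eq,
    Set.exists_range_iff, Finsupp.single_le_iff]

theorem isSocleElement_monomial_purePowerIdeal_iff {b : σ →₀ ℕ} :
    IsSocleElement (purePowerIdeal K a) (monomial b (1 : K)) ↔ ∀ i, b i + 1 = a i := by
  simp only [IsSocleElement, X_mul_monomial_one, monomial_mem_purePowerIdeal_iff, not_exists,
    not_le]
  constructor
  · rintro ⟨hlt, hmul⟩ i
    obtain ⟨j, hj⟩ := hmul i
    have := hlt j
    rcases eq_or_ne i j with rfl | hij
    · simp only [Finsupp.add_apply, Finsupp.single_eq_same] at hj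
      omega
    · simp only [Finsupp.add_apply, Finsupp.single_eq_of_ne' hij, zero_add] at hj
      omega
  · intro h
    refine ⟨fun i => by have := h i; omega, fun i => ⟨i, ?_⟩⟩
    simp only [Finsupp.add_apply, Finsupp.single_eq_same]
    have := h i
    omega

theorem radical_purePowerIdeal (ha : ∀ i, 1 ≤ a i) :
    (purePowerIdeal K a).radical = maxIdeal K σ := by
  apply le_antisymm
  · rw [maxIdeal_isMaximal.isPrime.radical_le_iff, purePowerIdeal, Ideal.span_le,
      Set.range_subset_iff]
    exact fun i => Ideal.pow_mem_of_mem _ (X_mem_maxIdeal i) _ (ha i)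
  · rw [maxIdeal, Ideal.span_le, Set.range_subset_iff]
    exact fun i => ⟨a i, X_pow_mem_purePowerIdeal i⟩

theorem vNumber_purePowerIdeal [Fintype σ] (ha : ∀ i, 1 ≤ a i) :
    vNumber (purePowerIdeal K a) = ∑ i, a i - Fintype.card σ := by
  obtain ⟨e, he⟩ := Finsupp.exists_add_one_eq ha
  have hsocle : {c | IsSocleElement (purePowerIdeal K a) (monomial c (1 : K))} = {e} := by
    ext c
    simp only [Set.mem_ofPred_eq, isSocleElement_monomial_purePowerIdeal_iff, Set.mem_singleton_iff]
    refine ⟨fun hc => Finsupp.ext fun i => ?_, fun hc => hc ▸ he⟩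
    have := hc i
    have := he i
    omega
  rw [isMonomialIdeal_purePowerIdeal.vNumber_eq_sInf_degree (radical_purePowerIdeal ha), hsocle,
    Set.image_singleton, csInf_singleton, Finsupp.degree_eq_sum_sub_card he]

end purePowerIdeal

end MvPolynomial

/-- v(I) = (∑ a_i) - t iff I is generated by the pure powers x_i^{a_i}. -/
theorem vNumber_eq_sum_pure_powers_iff {K : Type*} [Field K] (t : ℕ)
    (I : Ideal (MvPolynomial (Fin t) K))
    (hmon : IsMonomialIdeal I) (hprim : I.radical = maxIdeal K (Fin t))
    (a : Fin t → ℕ) (ha : ∀ i, 1 ≤ a i)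
    (hgen : ∀ i, Finsupp.single i (a i) ∈ minimalGenerators I) :
    vNumber I = (∑ i, a i) - t ↔
      I = Ideal.span (Set.range fun i => (X i : MvPolynomial (Fin t) K) ^ a i) := by
  change _ ↔ I = purePowerIdeal K a
  obtain ⟨e, he⟩ := Finsupp.exists_add_one_eq ha
  have hJI : purePowerIdeal K a ≤ I := Ideal.span_le.mpr <| Set.range_subset_iff.mpr fun i => by
    rw [X_pow_eq_monomial]
    exact (hgen i).1
  constructor
  · intro hv
    refine le_antisymm (hmon.le_of_forall_monomial_mem fun b hbI => ?_) hJI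
    by_contra hbJ
    have hbe : b ≤ e := Finsupp.le_def.mpr fun i => by
      have := not_exists.mp (monomial_mem_purePowerIdeal_iff.not.mp hbJ) i
      have := he i
      omega
    have := vNumber_lt_degree_of_monomial_mem (one_notMem_of_radical_eq_maxIdeal hprim)
      (fun i => he i ▸ hJI (X_pow_mem_purePowerIdeal i)) (monomial_mem_of_le hbI hbe)
    rw [Finsupp.degree_eq_sum_sub_card he, Fintype.card_fin] at this
    omega
  · rintro rfl
    simpa using vNumber_purePowerIdeal (K := K) ha

end
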